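/- arXiv:math-ph/0404025 — 7 statements merged into one kernel-verified Lean document; each statement's English description precedes it below -/
import Mathlib

section
/- Let d : ℝ → ℝ be smooth and nonvanishing, let k = d, and let u be a smooth solution of u_t = (d(u)u_x)_x + d(u)u_x. Then for any constant ε, with F(t,x) = (e^x + ε)·u and G(t,x) = -(e^x + ε)·d(u)·u_x - ε·D(u), where D' = d, the identity ∂_t F + ∂_x G = 0 holds. -/
noncomputable def pt (f : ℝ → ℝ → ℝ) (t x : ℝ) : ℝ := deriv (fun s => f s x) t
noncomputable def px (f : ℝ → ℝ → ℝ) (t x : ℝ) : ℝ := deriv (fun y => f t y) x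
def Smooth2 (f : ℝ → ℝ → ℝ) : Prop := ContDiff ℝ (⊤ : ℕ∞) (fun p : ℝ × ℝ => f p.1 p.2)

lemma smooth2_px (u : ℝ → ℝ → ℝ) (hu : Smooth2 u) : Smooth2 (px u) := by
  have hf : ContDiff ℝ (⊤ : ℕ∞) (fun p : ℝ × ℝ => u p.1 p.2) := hu
  have hg : ContDiff ℝ (⊤ : ℕ∞)
      (fun p : ℝ × ℝ => fderiv ℝ (fun q : ℝ × ℝ => u q.1 q.2) p ((0 : ℝ), (1 : ℝ))) :=
    (hf.fderiv_right (by simp)).clm_apply contDiff_const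
  have heq : (fun p : ℝ × ℝ => px u p.1 p.2) =
      (fun p : ℝ × ℝ => fderiv ℝ (fun q : ℝ × ℝ => u q.1 q.2) p ((0 : ℝ), (1 : ℝ))) := by
    funext p
    obtain ⟨t, x⟩ := p
    have hF := (hf.differentiable (by simp) (t, x)).hasFDerivAt
    have hL : HasDerivAt (fun y : ℝ => ((t, y) : ℝ × ℝ)) ((0 : ℝ), (1 : ℝ)) x :=
      (hasDerivAt_const x t).prodMk (hasDerivAt_id x)
    exact (hF.comp_hasDerivAt x hL).deriv
  show ContDiff ℝ (⊤ : ℕ∞) (fun p : ℝ × ℝ => px u p.1 p.2)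
  rw [heq]; exact hg

theorem stmt2 (d D : ℝ → ℝ) (u : ℝ → ℝ → ℝ) (ε : ℝ)
    (hd : ContDiff ℝ (⊤ : ℕ∞) d) (hd0 : ∀ s, d s ≠ 0)
    (hu : Smooth2 u) (hD : ∀ s, HasDerivAt D (d s) s)
    (hpde : ∀ t x, pt u t x =
      px (fun t x => d (u t x) * px u t x) t x + d (u t x) * px u t x) :
    ∀ t x, pt (fun t x => (Real.exp x + ε) * u t x) t x
      + px (fun t x => -((Real.exp x + ε) * d (u t x) * px u t x) - ε * D (u t x)) t x = 0 := by
  intro t x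
  have hpxu : Smooth2 (px u) := smooth2_px u hu
  have hsec : ∀ v : ℝ → ℝ → ℝ, Smooth2 v → ContDiff ℝ (⊤ : ℕ∞) (fun y => v t y) := fun v hv =>
    hv.comp (contDiff_const.prodMk contDiff_id)
  have hsect : ContDiff ℝ (⊤ : ℕ∞) (fun s => u s x) := hu.comp (contDiff_id.prodMk contDiff_const)
  -- derivative in t of F
  have hA : HasDerivAt (fun s => (Real.exp x + ε) * u s x) ((Real.exp x + ε) * pt u t x) t :=
    ((hsect.differentiable (by simp) t).hasDerivAt).const_mul (Real.exp x + ε)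
  -- derivative in x pieces
  have h1 : HasDerivAt (fun y => u t y) (px u t x) x :=
    ((hsec u hu).differentiable (by simp) x).hasDerivAt
  have h2 : HasDerivAt (fun y => d (u t y) * px u t y)
      (px (fun t x => d (u t x) * px u t x) t x) x := by
    have : DifferentiableAt ℝ (fun y => d (u t y) * px u t y) x :=
      (((hd.comp (hsec u hu)).differentiable (by simp) x)).mul
        ((hsec (px u) hpxu).differentiable (by simp) x)
    exact this.hasDerivAt
  have hexp : HasDerivAt (fun y : ℝ => Real.exp y + ε) (Real.exp x) x :=
    (Real.hasDerivAt_exp x).add_const ε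
  have h3 : HasDerivAt (fun y => (Real.exp y + ε) * (d (u t y) * px u t y))
      (Real.exp x * (d (u t x) * px u t x)
        + (Real.exp x + ε) * px (fun t x => d (u t x) * px u t x) t x) x := hexp.mul h2
  have h4 : HasDerivAt (fun y => D (u t y)) (d (u t x) * px u t x) x :=
    (hD (u t x)).comp x h1
  have h5 : HasDerivAt
      (fun y => -((Real.exp y + ε) * d (u t y) * px u t y) - ε * D (u t y))
      (-(Real.exp x * (d (u t x) * px u t x)
        + (Real.exp x + ε) * px (fun t x => d (u t x) * px u t x) t x)
        - ε * (d (u t x) * px u t x)) x := by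
    have := h3.neg.sub (h4.const_mul ε)
    simpa [mul_assoc, Pi.neg_def, Pi.sub_def] using this
  show deriv (fun s => (Real.exp x + ε) * u s x) t
      + deriv (fun y => -((Real.exp y + ε) * d (u t y) * px u t y) - ε * D (u t y)) x = 0
  rw [hA.deriv, h5.deriv, hpde t x]
  ring
end

section
/- Let u, v be smooth with u nonvanishing, satisfying v_x = u and v_t = u^{-2}·u_x (potential system for u_t = (u^{-2}u_x)_x). Let σ : ℝ × ℝ → ℝ be a smooth solution of the backward heat equation σ_t(t,s) + σ_ss(t,s) = 0. Then F(t,x) = σ(t, v(t,x)) and G(t,x) = σ_s(t, v(t,x))·u(t,x)^{-1} satisfy ∂_t F + ∂_x G = 0. -/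
lemma diff_t (f : ℝ → ℝ → ℝ) (hf : Smooth2 f) (x : ℝ) :
    Differentiable ℝ (fun s => f s x) :=
  (hf.differentiable (by simp)).comp (differentiable_id.prodMk (differentiable_const x))

lemma diff_x (f : ℝ → ℝ → ℝ) (hf : Smooth2 f) (t : ℝ) :
    Differentiable ℝ (fun y => f t y) :=
  (hf.differentiable (by simp)).comp ((differentiable_const t).prodMk differentiable_id)

lemma hasDerivAt_t (f : ℝ → ℝ → ℝ) (hf : Smooth2 f) (t x : ℝ) :
    HasDerivAt (fun s => f s x) (pt f t x) t := (diff_t f hf x t).hasDerivAt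

lemma hasDerivAt_x (f : ℝ → ℝ → ℝ) (hf : Smooth2 f) (t x : ℝ) :
    HasDerivAt (fun y => f t y) (px f t x) x := (diff_x f hf t x).hasDerivAt

lemma hL (f : ℝ → ℝ → ℝ) (hf : Smooth2 f) (p : ℝ × ℝ) :
    HasFDerivAt (fun p : ℝ × ℝ => f p.1 p.2)
      (fderiv ℝ (fun p : ℝ × ℝ => f p.1 p.2) p) p :=
  ((hf.differentiable (by simp)) p).hasFDerivAt

lemma pt_apply (f : ℝ → ℝ → ℝ) (hf : Smooth2 f) (t x : ℝ) :
    pt f t x = fderiv ℝ (fun p : ℝ × ℝ => f p.1 p.2) (t, x) (1, 0) := by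
  have hc : HasDerivAt (fun s : ℝ => (s, x)) ((1 : ℝ), (0 : ℝ)) t :=
    (hasDerivAt_id t).prodMk (hasDerivAt_const t x)
  exact ((hL f hf (t, x)).comp_hasDerivAt t hc).deriv

lemma px_apply (f : ℝ → ℝ → ℝ) (hf : Smooth2 f) (t x : ℝ) :
    px f t x = fderiv ℝ (fun p : ℝ × ℝ => f p.1 p.2) (t, x) (0, 1) := by
  have hc : HasDerivAt (fun y : ℝ => (t, y)) ((0 : ℝ), (1 : ℝ)) x :=
    (hasDerivAt_const x t).prodMk (hasDerivAt_id x)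
  exact ((hL f hf (t, x)).comp_hasDerivAt x hc).deriv

lemma smooth_px (f : ℝ → ℝ → ℝ) (hf : Smooth2 f) : Smooth2 (px f) := by
  have h : (fun p : ℝ × ℝ => px f p.1 p.2)
      = fun p => fderiv ℝ (fun p : ℝ × ℝ => f p.1 p.2) p (0, 1) := by
    funext p; exact px_apply f hf p.1 p.2
  rw [Smooth2, h]
  exact (hf.fderiv_right (by simp)).clm_apply contDiff_const

lemma pt_comp (f w : ℝ → ℝ → ℝ) (hf : Smooth2 f) (hw : Smooth2 w) (t x : ℝ) :
    pt (fun t x => f t (w t x)) t x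
      = pt f t (w t x) + px f t (w t x) * pt w t x := by
  have hc : HasDerivAt (fun s : ℝ => (s, w s x)) ((1 : ℝ), pt w t x) t :=
    (hasDerivAt_id t).prodMk (hasDerivAt_t w hw t x)
  have h : HasDerivAt (fun s => f s (w s x))
      (fderiv ℝ (fun p : ℝ × ℝ => f p.1 p.2) (t, w t x) ((1 : ℝ), pt w t x)) t :=
    by have := (hL f hf (t, w t x)).comp_hasDerivAt t hc; exact this
  rw [pt, h.deriv]
  have he : ((1 : ℝ), pt w t x) = ((1 : ℝ), (0 : ℝ)) + pt w t x • ((0 : ℝ), (1 : ℝ)) := by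
    simp [Prod.ext_iff]
  rw [he, map_add, map_smul, pt_apply f hf, px_apply f hf, smul_eq_mul]
  ring

lemma px_comp (f w : ℝ → ℝ → ℝ) (hf : Smooth2 f) (hw : Smooth2 w) (t x : ℝ) :
    px (fun t x => f t (w t x)) t x = px f t (w t x) * px w t x := by
  have hc : HasDerivAt (fun y : ℝ => (t, w t y)) ((0 : ℝ), px w t x) x :=
    (hasDerivAt_const x t).prodMk (hasDerivAt_x w hw t x)
  have h : HasDerivAt (fun y => f t (w t y))
      (fderiv ℝ (fun p : ℝ × ℝ => f p.1 p.2) (t, w t x) ((0 : ℝ), px w t x)) x :=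
    by have := (hL f hf (t, w t x)).comp_hasDerivAt x hc; exact this
  rw [px, h.deriv]
  have he : ((0 : ℝ), px w t x) = px w t x • ((0 : ℝ), (1 : ℝ)) := by
    simp [Prod.ext_iff]
  rw [he, map_smul, px_apply f hf, smul_eq_mul, mul_comm]

theorem stmt10 (u v σ : ℝ → ℝ → ℝ)
    (hu : Smooth2 u) (hv : Smooth2 v) (hσ : Smooth2 σ)
    (hu0 : ∀ t x, u t x ≠ 0)
    (hvx : ∀ t x, px v t x = u t x)
    (hvt : ∀ t x, pt v t x = (u t x) ^ (-2 : ℤ) * px u t x)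
    (hback : ∀ t s, pt σ t s + px (px σ) t s = 0) :
    ∀ t x, pt (fun t x => σ t (v t x)) t x
      + px (fun t x => px σ t (v t x) * (u t x)⁻¹) t x = 0 := by
  intro t x
  have hpσ : Smooth2 (px σ) := smooth_px σ hσ
  -- pt of F
  have h1 : pt (fun t x => σ t (v t x)) t x
      = pt σ t (v t x) + px σ t (v t x) * pt v t x := pt_comp σ v hσ hv t x
  -- px of G: product rule
  have hcomp : Smooth2 (fun t x => px σ t (v t x)) := hpσ.comp (contDiff_fst.prodMk hv)
  have hd1 : DifferentiableAt ℝ (fun y => px σ t (v t y)) x := (diff_x _ hcomp t) x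
  have hd2 : DifferentiableAt ℝ (fun y => (u t y)⁻¹) x :=
    ((diff_x u hu t) x).inv (hu0 t x)
  have h2 : px (fun t x => px σ t (v t x) * (u t x)⁻¹) t x
      = px (fun t x => px σ t (v t x)) t x * (u t x)⁻¹
        + px σ t (v t x) * (-(px u t x) / (u t x) ^ 2) := by
    have hinv : deriv (fun y => (u t y)⁻¹) x = -(px u t x) / (u t x) ^ 2 :=
      ((hasDerivAt_x u hu t x).inv (hu0 t x)).deriv
    rw [px, deriv_fun_mul hd1 hd2, hinv]
    rfl
  have h3 : px (fun t x => px σ t (v t x)) t x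
      = px (px σ) t (v t x) * px v t x := px_comp (px σ) v hpσ hv t x
  rw [h1, h2, h3, hvx, hvt]
  have hb := hback t (v t x)
  have hU := hu0 t x
  have : pt σ t (v t x) = - px (px σ) t (v t x) := by linarith
  rw [this]
  have hz : (u t x : ℝ) ^ (-2 : ℤ) = ((u t x) ^ 2)⁻¹ := by
    rw [zpow_neg]
    norm_cast
  rw [hz]
  field_simp
  ring
end

section
/- Let u, v be smooth satisfying v_x = u and v_t = u_x + u² (potential system for Burgers-type equation u_t = u_xx + 2u·u_x). Let α : ℝ × ℝ → ℝ satisfy α_t + α_xx = 0. Then F(t,x) = α(t,x)·e^{v(t,x)} and G(t,x) = α_x(t,x)·e^{v(t,x)} - α(t,x)·u(t,x)·e^{v(t,x)} satisfy ∂_t F + ∂_x G = 0. -/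
lemma slice_t {f : ℝ → ℝ → ℝ} (hf : Smooth2 f) (x : ℝ) :
    ContDiff ℝ (⊤ : ℕ∞) (fun s => f s x) :=
  hf.comp (contDiff_id.prodMk contDiff_const)

lemma slice_x {f : ℝ → ℝ → ℝ} (hf : Smooth2 f) (t : ℝ) :
    ContDiff ℝ (⊤ : ℕ∞) (fun y => f t y) :=
  hf.comp (contDiff_const.prodMk contDiff_id)

theorem stmt12 (u v α : ℝ → ℝ → ℝ)
    (hu : Smooth2 u) (hv : Smooth2 v) (hα : Smooth2 α)
    (hvx : ∀ t x, px v t x = u t x)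
    (hvt : ∀ t x, pt v t x = px u t x + (u t x) ^ 2)
    (hback : ∀ t x, pt α t x + px (px α) t x = 0) :
    ∀ t x, pt (fun t x => α t x * Real.exp (v t x)) t x
      + px (fun t x => px α t x * Real.exp (v t x)
            - α t x * u t x * Real.exp (v t x)) t x = 0 := by
  intro t x
  -- HasDerivAt facts in t-direction
  have hαt : HasDerivAt (fun s => α s x) (pt α t x) t :=
    ((slice_t hα x).differentiable (by simp) t).hasDerivAt
  have hvt' : HasDerivAt (fun s => v s x) (pt v t x) t :=
    ((slice_t hv x).differentiable (by simp) t).hasDerivAt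
  have hexpt : HasDerivAt (fun s => Real.exp (v s x))
      (Real.exp (v t x) * pt v t x) t := hvt'.exp
  have hF : HasDerivAt (fun s => α s x * Real.exp (v s x))
      (pt α t x * Real.exp (v t x) + α t x * (Real.exp (v t x) * pt v t x)) t :=
    hαt.mul hexpt
  -- x-direction
  have hαx : HasDerivAt (fun y => α t y) (px α t x) x :=
    ((slice_x hα t).differentiable (by simp) x).hasDerivAt
  have hux : HasDerivAt (fun y => u t y) (px u t x) x :=
    ((slice_x hu t).differentiable (by simp) x).hasDerivAt
  have hvx' : HasDerivAt (fun y => v t y) (px v t x) x :=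
    ((slice_x hv t).differentiable (by simp) x).hasDerivAt
  have hexpx : HasDerivAt (fun y => Real.exp (v t y))
      (Real.exp (v t x) * px v t x) x := hvx'.exp
  have hpxα_smooth : ContDiff ℝ (⊤ : ℕ∞) (fun y => px α t y) := by
    have h : (fun y => px α t y) = deriv (fun y => α t y) := rfl
    rw [h]
    exact (contDiff_infty_iff_deriv.mp ((slice_x hα t).of_le (by simp))).2
  have hαxx : HasDerivAt (fun y => px α t y) (px (px α) t x) x :=
    ((hpxα_smooth).differentiable (by simp) x).hasDerivAt
  have hG : HasDerivAt
      (fun y => px α t y * Real.exp (v t y) - α t y * u t y * Real.exp (v t y))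
      ((px (px α) t x * Real.exp (v t x) + px α t x * (Real.exp (v t x) * px v t x))
        - ((px α t x * u t x + α t x * px u t x) * Real.exp (v t x)
          + α t x * u t x * (Real.exp (v t x) * px v t x))) x :=
    (hαxx.mul hexpx).sub ((hαx.mul hux).mul hexpx)
  have e1 : pt (fun t x => α t x * Real.exp (v t x)) t x
      = pt α t x * Real.exp (v t x) + α t x * (Real.exp (v t x) * pt v t x) :=
    hF.deriv
  have e2 : px (fun t x => px α t x * Real.exp (v t x)
      - α t x * u t x * Real.exp (v t x)) t x
      = (px (px α) t x * Real.exp (v t x) + px α t x * (Real.exp (v t x) * px v t x))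
        - ((px α t x * u t x + α t x * px u t x) * Real.exp (v t x)
          + α t x * u t x * (Real.exp (v t x) * px v t x)) := hG.deriv
  rw [e1, e2, hvx t x, hvt t x]
  have hb : pt α t x = -px (px α) t x := by linarith [hback t x]
  rw [hb]
  ring
end

section
/- Let d : ℝ → ℝ be smooth and nonvanishing, and let (u,v) be smooth with v_x = x·u and v_t = x·d(u)·u_x - D(u), where D' = d (potential system for u_t = (d(u)u_x)_x). Then on the domain x ≠ 0, F = x^{-2}·v and G = -x^{-1}·D(u) satisfy ∂_t F + ∂_x G = 0. -/
theorem stmt13 (d D : ℝ → ℝ) (u v : ℝ → ℝ → ℝ)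
    (hd : ContDiff ℝ (⊤ : ℕ∞) d) (hd0 : ∀ s, d s ≠ 0)
    (hu : Smooth2 u) (hv : Smooth2 v)
    (hD : ∀ s, HasDerivAt D (d s) s)
    (hvx : ∀ t x, px v t x = x * u t x)
    (hvt : ∀ t x, pt v t x = x * d (u t x) * px u t x - D (u t x)) :
    ∀ t x, x ≠ 0 →
      pt (fun t x => x ^ (-2 : ℤ) * v t x) t x
        + px (fun t x => -(x⁻¹ * D (u t x))) t x = 0 := by
  intro t x hx
  -- differentiability of slices
  have hvt' : DifferentiableAt ℝ (fun s => v s x) t := by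
    exact (hv.differentiable (by simp)).comp
      (differentiable_id.prodMk (differentiable_const x)) t
  have hux : HasDerivAt (fun y => u t y) (px u t x) x := by
    have : DifferentiableAt ℝ (fun y => u t y) x :=
      (hu.differentiable (by simp)).comp
        ((differentiable_const t).prodMk differentiable_id) x
    simpa [px] using this.hasDerivAt
  -- compute pt term
  have h1 : pt (fun t x => x ^ (-2 : ℤ) * v t x) t x
      = x ^ (-2 : ℤ) * pt v t x := by
    simp only [pt]
    rw [deriv_const_mul _ hvt']
  -- compute px term
  have hinv : HasDerivAt (fun y : ℝ => y⁻¹) (-(x ^ 2)⁻¹) x := hasDerivAt_inv hx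
  have hDu : HasDerivAt (fun y => D (u t y)) (d (u t x) * px u t x) x :=
    (hD (u t x)).comp x hux
  have hprod : HasDerivAt (fun y : ℝ => -(y⁻¹ * D (u t y)))
      (-((-(x ^ 2)⁻¹) * D (u t x) + x⁻¹ * (d (u t x) * px u t x))) x :=
    (hinv.mul hDu).neg
  have h2 : px (fun t x => -(x⁻¹ * D (u t x))) t x
      = -((-(x ^ 2)⁻¹) * D (u t x) + x⁻¹ * (d (u t x) * px u t x)) := by
    simpa [px] using hprod.deriv
  rw [h1, h2, hvt t x]
  have hz : (x : ℝ) ^ (-2 : ℤ) = (x ^ 2)⁻¹ := by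
    rw [zpow_neg, zpow_two]; ring_nf
  rw [hz]
  field_simp
  ring
end

section
/- Let d be smooth and nonvanishing, ε ∈ ℝ, and let (u,v) be smooth with v_x = (e^x + ε)·u and v_t = (e^x + ε)·d(u)·u_x + ε·D(u), where D' = d (potential system for u_t = (d(u)u_x)_x + d(u)u_x). Then on the domain where e^x + ε ≠ 0, F = e^x·(e^x+ε)^{-2}·v and G = -e^x·(e^x+ε)^{-1}·D(u) satisfy ∂_t F + ∂_x G = 0. -/
theorem stmt14 (d D : ℝ → ℝ) (u v : ℝ → ℝ → ℝ) (ε : ℝ)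
    (hd : ContDiff ℝ (⊤ : ℕ∞) d) (hd0 : ∀ s, d s ≠ 0)
    (hu : Smooth2 u) (hv : Smooth2 v)
    (hD : ∀ s, HasDerivAt D (d s) s)
    (hvx : ∀ t x, px v t x = (Real.exp x + ε) * u t x)
    (hvt : ∀ t x, pt v t x = (Real.exp x + ε) * d (u t x) * px u t x + ε * D (u t x)) :
    ∀ t x, Real.exp x + ε ≠ 0 →
      pt (fun t x => Real.exp x * (Real.exp x + ε) ^ (-2 : ℤ) * v t x) t x
        + px (fun t x => -(Real.exp x * (Real.exp x + ε)⁻¹ * D (u t x))) t x = 0 := by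
  intro t x hx
  -- v is differentiable in t
  have hvdiff : Differentiable ℝ (fun s => v s x) := by
    have h1 : Differentiable ℝ (fun p : ℝ × ℝ => v p.1 p.2) := hv.differentiable (by simp)
    exact h1.comp (differentiable_id.prodMk (differentiable_const x))
  have hVt : HasDerivAt (fun s => v s x) (pt v t x) t := (hvdiff t).hasDerivAt
  -- u is differentiable in x
  have hudiff : Differentiable ℝ (fun y => u t y) := by
    have h1 : Differentiable ℝ (fun p : ℝ × ℝ => u p.1 p.2) := hu.differentiable (by simp)
    exact h1.comp ((differentiable_const t).prodMk differentiable_id)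
  have hUx : HasDerivAt (fun y => u t y) (px u t x) x := (hudiff x).hasDerivAt
  have hDu : HasDerivAt (fun y => D (u t y)) (d (u t x) * px u t x) x :=
    (hD (u t x)).comp x hUx
  have hE : HasDerivAt Real.exp (Real.exp x) x := Real.hasDerivAt_exp x
  have hexp : HasDerivAt (fun y : ℝ => Real.exp y + ε) (Real.exp x) x :=
    hE.add_const ε
  have hinv : HasDerivAt (fun y : ℝ => (Real.exp y + ε)⁻¹)
      (-(Real.exp x) / (Real.exp x + ε) ^ 2) x := hexp.inv hx
  have hG : HasDerivAt (fun y => -(Real.exp y * (Real.exp y + ε)⁻¹ * D (u t y)))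
      (-((Real.exp x * (-(Real.exp x) / (Real.exp x + ε) ^ 2)
          + Real.exp x * (Real.exp x + ε)⁻¹) * D (u t x)
        + Real.exp x * (Real.exp x + ε)⁻¹ * (d (u t x) * px u t x))) x := by
    have := ((hE.mul hinv).mul hDu).neg
    refine this.congr_deriv ?_
    simp only [Pi.mul_apply]
    ring
  have hF : HasDerivAt (fun s => Real.exp x * (Real.exp x + ε) ^ (-2 : ℤ) * v s x)
      (Real.exp x * (Real.exp x + ε) ^ (-2 : ℤ) * pt v t x) t :=
    hVt.const_mul _
  have e1 : pt (fun t x => Real.exp x * (Real.exp x + ε) ^ (-2 : ℤ) * v t x) t x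
      = Real.exp x * (Real.exp x + ε) ^ (-2 : ℤ) * pt v t x := hF.deriv
  have e2 : px (fun t x => -(Real.exp x * (Real.exp x + ε)⁻¹ * D (u t x))) t x
      = -((Real.exp x * (-(Real.exp x) / (Real.exp x + ε) ^ 2)
          + Real.exp x * (Real.exp x + ε)⁻¹) * D (u t x)
        + Real.exp x * (Real.exp x + ε)⁻¹ * (d (u t x) * px u t x)) := hG.deriv
  rw [e1, e2, hvt]
  have hz : (Real.exp x + ε) ^ (-2 : ℤ) = ((Real.exp x + ε) ^ 2)⁻¹ := by
    rw [zpow_neg, zpow_two, sq]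
  rw [hz]
  field_simp
  ring
end

section
/- Let α, β : ℝ × ℝ → ℝ be smooth solutions of the backward heat equation (α_t + α_xx = 0, β_t + β_xx = 0) with α nonvanishing, and let (u,v) be smooth with v_x = α·u and v_t = α·u_x - α_x·u (potential system for the heat equation u_t = u_xx). Then F = (β/α)_x·v and G = -α·(β/α)_x·u - (β/α)_t·v satisfy ∂_t F + ∂_x G = 0. -/
namespace Aux15

def F2 (f : ℝ → ℝ → ℝ) : ℝ × ℝ → ℝ := fun p => f p.1 p.2

theorem hasDerivAt_t {f : ℝ → ℝ → ℝ} (hf : Smooth2 f) (t x : ℝ) :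
    HasDerivAt (fun s => f s x) (fderiv ℝ (F2 f) (t, x) (1, 0)) t := by
  have h1 : HasFDerivAt (F2 f) (fderiv ℝ (F2 f) (t, x)) (t, x) :=
    (hf.differentiable (by simp) (t, x)).hasFDerivAt
  have h2 : HasDerivAt (fun s : ℝ => (s, x)) ((1 : ℝ), (0 : ℝ)) t := by
    simpa using (HasDerivAt.prodMk (hasDerivAt_id t) (hasDerivAt_const t x))
  exact h1.comp_hasDerivAt t h2

theorem hasDerivAt_x {f : ℝ → ℝ → ℝ} (hf : Smooth2 f) (t x : ℝ) :
    HasDerivAt (fun y => f t y) (fderiv ℝ (F2 f) (t, x) (0, 1)) x := by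
  have h1 : HasFDerivAt (F2 f) (fderiv ℝ (F2 f) (t, x)) (t, x) :=
    (hf.differentiable (by simp) (t, x)).hasFDerivAt
  have h2 : HasDerivAt (fun y : ℝ => (t, y)) ((0 : ℝ), (1 : ℝ)) x := by
    simpa using (HasDerivAt.prodMk (hasDerivAt_const x t) (hasDerivAt_id x))
  exact h1.comp_hasDerivAt x h2

theorem pt_eq {f : ℝ → ℝ → ℝ} (hf : Smooth2 f) (t x : ℝ) :
    pt f t x = fderiv ℝ (F2 f) (t, x) (1, 0) := (hasDerivAt_t hf t x).deriv

theorem px_eq {f : ℝ → ℝ → ℝ} (hf : Smooth2 f) (t x : ℝ) :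
    px f t x = fderiv ℝ (F2 f) (t, x) (0, 1) := (hasDerivAt_x hf t x).deriv

theorem smooth_pt {f : ℝ → ℝ → ℝ} (hf : Smooth2 f) : Smooth2 (pt f) := by
  have h : (fun p : ℝ × ℝ => pt f p.1 p.2) = fun p => fderiv ℝ (F2 f) p (1, 0) := by
    funext p; exact pt_eq hf p.1 p.2
  rw [Smooth2, h]
  exact (hf.fderiv_right (by simp)).clm_apply contDiff_const

theorem smooth_px {f : ℝ → ℝ → ℝ} (hf : Smooth2 f) : Smooth2 (px f) := by
  have h : (fun p : ℝ × ℝ => px f p.1 p.2) = fun p => fderiv ℝ (F2 f) p (0, 1) := by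
    funext p; exact px_eq hf p.1 p.2
  rw [Smooth2, h]
  exact (hf.fderiv_right (by simp)).clm_apply contDiff_const

theorem symm2 {f : ℝ → ℝ → ℝ} (hf : Smooth2 f) (t x : ℝ) :
    pt (px f) t x = px (pt f) t x := by
  have hsymm : IsSymmSndFDerivAt ℝ (F2 f) (t, x) :=
    (hf.contDiffAt).isSymmSndFDerivAt (by rw [minSmoothness_of_isRCLikeNormedField]; exact WithTop.coe_le_coe.mpr (le_top : (2 : ℕ∞) ≤ ⊤))
  have hfd : ContDiff ℝ (⊤ : ℕ∞) (fderiv ℝ (F2 f)) := hf.fderiv_right (by simp)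
  have e1 : pt (px f) t x = fderiv ℝ (fderiv ℝ (F2 f)) (t, x) (1, 0) (0, 1) := by
    rw [pt_eq (smooth_px hf) t x]
    have he : F2 (px f) = fun p => fderiv ℝ (F2 f) p (0, 1) := by
      funext p; exact px_eq hf p.1 p.2
    rw [he, fderiv_clm_apply (𝕜 := ℝ) (hfd.differentiable (by simp) (t, x))
      (differentiableAt_const ((0 : ℝ), (1 : ℝ)))]
    simp
  have e2 : px (pt f) t x = fderiv ℝ (fderiv ℝ (F2 f)) (t, x) (0, 1) (1, 0) := by
    rw [px_eq (smooth_pt hf) t x]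
    have he : F2 (pt f) = fun p => fderiv ℝ (F2 f) p (1, 0) := by
      funext p; exact pt_eq hf p.1 p.2
    rw [he, fderiv_clm_apply (𝕜 := ℝ) (hfd.differentiable (by simp) (t, x))
      (differentiableAt_const ((1 : ℝ), (0 : ℝ)))]
    simp
  rw [e1, e2, hsymm (1, 0) (0, 1)]

theorem smul2 {f g : ℝ → ℝ → ℝ} (hf : Smooth2 f) (hg : Smooth2 g) :
    Smooth2 (fun t x => f t x * g t x) := ContDiff.mul hf hg

theorem sdiv2 {f g : ℝ → ℝ → ℝ} (hf : Smooth2 f) (hg : Smooth2 g)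
    (hg0 : ∀ t x, g t x ≠ 0) : Smooth2 (fun t x => f t x / g t x) :=
  ContDiff.div hf hg fun p => hg0 p.1 p.2

theorem diff_t {f : ℝ → ℝ → ℝ} (hf : Smooth2 f) (t x : ℝ) :
    DifferentiableAt ℝ (fun s => f s x) t := (hasDerivAt_t hf t x).differentiableAt

theorem diff_x {f : ℝ → ℝ → ℝ} (hf : Smooth2 f) (t x : ℝ) :
    DifferentiableAt ℝ (fun y => f t y) x := (hasDerivAt_x hf t x).differentiableAt

theorem pt_mul {f g : ℝ → ℝ → ℝ} (hf : Smooth2 f) (hg : Smooth2 g) (t x : ℝ) :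
    pt (fun t x => f t x * g t x) t x = pt f t x * g t x + f t x * pt g t x :=
  deriv_mul (diff_t hf t x) (diff_t hg t x)

theorem px_mul {f g : ℝ → ℝ → ℝ} (hf : Smooth2 f) (hg : Smooth2 g) (t x : ℝ) :
    px (fun t x => f t x * g t x) t x = px f t x * g t x + f t x * px g t x :=
  deriv_mul (diff_x hf t x) (diff_x hg t x)

theorem px_add {f g : ℝ → ℝ → ℝ} (hf : Smooth2 f) (hg : Smooth2 g) (t x : ℝ) :
    px (fun t x => f t x + g t x) t x = px f t x + px g t x :=
  deriv_add (diff_x hf t x) (diff_x hg t x)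

theorem px_neg_sub {f g : ℝ → ℝ → ℝ} (hf : Smooth2 f) (hg : Smooth2 g) (t x : ℝ) :
    px (fun t x => -(f t x) - g t x) t x = -(px f t x) - px g t x := by
  unfold px
  show deriv (fun y => -f t y - g t y) x = _
  rw [deriv_fun_sub (f := fun y => -f t y) ((diff_x hf t x).neg) (diff_x hg t x), deriv.fun_neg]

end Aux15

open Aux15 in
theorem stmt15 (α β u v : ℝ → ℝ → ℝ)
    (hα : Smooth2 α) (hβ : Smooth2 β) (hu : Smooth2 u) (hv : Smooth2 v)
    (hα0 : ∀ t x, α t x ≠ 0)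
    (hαheat : ∀ t x, pt α t x + px (px α) t x = 0)
    (hβheat : ∀ t x, pt β t x + px (px β) t x = 0)
    (hvx : ∀ t x, px v t x = α t x * u t x)
    (hvt : ∀ t x, pt v t x = α t x * px u t x - px α t x * u t x) :
    ∀ t x, pt (fun t x => px (fun t x => β t x / α t x) t x * v t x) t x
      + px (fun t x => -(α t x * px (fun t x => β t x / α t x) t x * u t x)
            - pt (fun t x => β t x / α t x) t x * v t x) t x = 0 := by
  set γ : ℝ → ℝ → ℝ := fun t x => β t x / α t x with hγdef
  have hγ : Smooth2 γ := sdiv2 hβ hα hα0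
  have hβγ : β = fun t x => α t x * γ t x := by
    funext t x
    rw [hγdef]
    rw [mul_comm, div_mul_cancel₀ _ (hα0 t x)]
  -- first derivatives of β
  have hpxβ : px β = fun t x => px α t x * γ t x + α t x * px γ t x := by
    funext t x
    conv_lhs => rw [hβγ]
    exact px_mul hα hγ t x
  have hptβ : ∀ t x, pt β t x = pt α t x * γ t x + α t x * pt γ t x := by
    intro t x
    conv_lhs => rw [hβγ]
    exact pt_mul hα hγ t x
  -- second derivative of β
  have hpxpxβ : ∀ t x, px (px β) t x = px (px α) t x * γ t x + 2 * px α t x * px γ t x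
      + α t x * px (px γ) t x := by
    intro t x
    rw [hpxβ, px_add (smul2 (smooth_px hα) hγ) (smul2 hα (smooth_px hγ)) t x,
      px_mul (smooth_px hα) hγ t x, px_mul hα (smooth_px hγ) t x]
    ring
  -- key identity from the two heat equations
  have key : ∀ t x, 2 * px α t x * px γ t x + α t x * px (px γ) t x
      + α t x * pt γ t x = 0 := by
    intro t x
    have h1 := hβheat t x
    rw [hptβ t x, hpxpxβ t x] at h1
    linear_combination h1 - γ t x * hαheat t x
  intro t x
  rw [pt_mul (smooth_px hγ) hv t x,
    px_neg_sub (smul2 (smul2 hα (smooth_px hγ)) hu) (smul2 (smooth_pt hγ) hv) t x,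
    px_mul (smul2 hα (smooth_px hγ)) hu t x, px_mul hα (smooth_px hγ) t x,
    px_mul (smooth_pt hγ) hv t x, hvx t x, hvt t x, symm2 hγ t x]
  linear_combination (-(u t x)) * key t x
end

section
/- Let u be a smooth solution of u_t = u_xx (d = 1, k = 0). A smooth function ψ(t,x) satisfies the classifying equation ψ_t + ψ_xx = 0 if and only if F = ψ·u, G = -ψ·u_x + ψ_x·u satisfies ∂_t F + ∂_x G = 0 for every smooth solution u of the heat equation. -/
lemma diffAt_x {f : ℝ → ℝ → ℝ} (hf : Smooth2 f) (t x : ℝ) :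
    DifferentiableAt ℝ (fun y => f t y) x := by
  have : ContDiff ℝ (⊤ : ℕ∞) (fun y : ℝ => f t y) :=
    hf.comp (contDiff_const.prodMk contDiff_id)
  exact (this.differentiable (by simp)).differentiableAt

lemma diffAt_t {f : ℝ → ℝ → ℝ} (hf : Smooth2 f) (t x : ℝ) :
    DifferentiableAt ℝ (fun s => f s x) t := by
  have : ContDiff ℝ (⊤ : ℕ∞) (fun s : ℝ => f s x) :=
    hf.comp (contDiff_id.prodMk contDiff_const)
  exact (this.differentiable (by simp)).differentiableAt

lemma px_eq_fderiv {f : ℝ → ℝ → ℝ} (hf : Smooth2 f) (t x : ℝ) :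
    px f t x = fderiv ℝ (fun p : ℝ × ℝ => f p.1 p.2) (t, x) ((0 : ℝ), (1 : ℝ)) := by
  have hF : HasFDerivAt (fun p : ℝ × ℝ => f p.1 p.2)
      (fderiv ℝ (fun p : ℝ × ℝ => f p.1 p.2) (t, x)) (t, x) :=
    ((hf.differentiable (by simp)) (t, x)).hasFDerivAt
  have hline : HasDerivAt (fun y : ℝ => ((t, y) : ℝ × ℝ)) ((0 : ℝ), (1 : ℝ)) x :=
    (hasDerivAt_const x t).prodMk (hasDerivAt_id x)
  have := hF.comp_hasDerivAt x hline
  exact this.deriv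

lemma smooth2_px_s17 {f : ℝ → ℝ → ℝ} (hf : Smooth2 f) : Smooth2 (px f) := by
  have h : ContDiff ℝ (⊤ : ℕ∞)
      (fun p : ℝ × ℝ => fderiv ℝ (fun q : ℝ × ℝ => f q.1 q.2) p ((0 : ℝ), (1 : ℝ))) :=
    (hf.fderiv_right (le_refl _)).clm_apply contDiff_const
  have : (fun p : ℝ × ℝ => px f p.1 p.2) =
      (fun p : ℝ × ℝ => fderiv ℝ (fun q : ℝ × ℝ => f q.1 q.2) p ((0 : ℝ), (1 : ℝ))) := by
    funext p
    exact px_eq_fderiv hf p.1 p.2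
  unfold Smooth2
  rw [this]
  exact h

lemma pt_mul {f g : ℝ → ℝ → ℝ} (hf : Smooth2 f) (hg : Smooth2 g) (t x : ℝ) :
    pt (fun t x => f t x * g t x) t x = pt f t x * g t x + f t x * pt g t x := by
  simpa [pt] using deriv_fun_mul (diffAt_t hf t x) (diffAt_t hg t x)

lemma px_mul {f g : ℝ → ℝ → ℝ} (hf : Smooth2 f) (hg : Smooth2 g) (t x : ℝ) :
    px (fun t x => f t x * g t x) t x = px f t x * g t x + f t x * px g t x := by
  simpa [px] using deriv_fun_mul (diffAt_x hf t x) (diffAt_x hg t x)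

theorem stmt17 (ψ : ℝ → ℝ → ℝ) (hψ : Smooth2 ψ) :
    (∀ t x, pt ψ t x + px (px ψ) t x = 0) ↔
      (∀ u : ℝ → ℝ → ℝ, Smooth2 u → (∀ t x, pt u t x = px (px u) t x) →
        ∀ t x, pt (fun t x => ψ t x * u t x) t x
          + px (fun t x => -(ψ t x * px u t x) + px ψ t x * u t x) t x = 0) := by
  constructor
  · intro hcl u hu hheat t x
    have hux : Smooth2 (px u) := smooth2_px_s17 hu
    have hψx : Smooth2 (px ψ) := smooth2_px_s17 hψ
    have h1 : pt (fun t x => ψ t x * u t x) t x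
        = pt ψ t x * u t x + ψ t x * pt u t x := pt_mul hψ hu t x
    have h2 : px (fun t x => -(ψ t x * px u t x) + px ψ t x * u t x) t x
        = -(px ψ t x * px u t x + ψ t x * px (px u) t x)
          + (px (px ψ) t x * u t x + px ψ t x * px u t x) := by
      have da : DifferentiableAt ℝ (fun y => ψ t y * px u t y) x :=
        (diffAt_x hψ t x).mul (diffAt_x hux t x)
      have db : DifferentiableAt ℝ (fun y => px ψ t y * u t y) x :=
        (diffAt_x hψx t x).mul (diffAt_x hu t x)
      have := deriv_fun_add da.fun_neg db
      rw [px, this, deriv.fun_neg]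
      rw [deriv_fun_mul (diffAt_x hψ t x) (diffAt_x hux t x),
          deriv_fun_mul (diffAt_x hψx t x) (diffAt_x hu t x)]
      rfl
    rw [h1, h2, hheat t x]
    linear_combination u t x * hcl t x
  · intro h t x
    have hone : Smooth2 (fun _ _ : ℝ => (1 : ℝ)) := contDiff_const
    have hpxone : px (fun _ _ : ℝ => (1 : ℝ)) = fun _ _ => 0 := by
      funext s y; simp [px]
    have hheat : ∀ t x, pt (fun _ _ : ℝ => (1 : ℝ)) t x
        = px (px (fun _ _ : ℝ => (1 : ℝ))) t x := by
      intro s y; simp [pt, hpxone, px]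
    have key := h (fun _ _ => 1) hone hheat t x
    have e1 : (fun t x => ψ t x * (fun _ _ : ℝ => (1:ℝ)) t x) = ψ := by funext s y; simp
    have e2 : (fun t x => -(ψ t x * px (fun _ _ : ℝ => (1:ℝ)) t x)
        + px ψ t x * (fun _ _ : ℝ => (1:ℝ)) t x) = px ψ := by
      funext s y; simp [hpxone]
    rw [e1, e2] at key
    exact key
end
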